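/- Let ν > −1, t = (ν + n + 1)/2, β > 0, f ∈ A^∞_t(Ω), and ε > 0. If G := ∫_Ω ( ∫_{N_{ε,t}(f)} γ_{β−t}(w) |B_β(z,w)| dm(w) )² γ_ν(z) dm(z) < ∞, then the function f₂(z) = C_β ∫_{N_{ε,t}(f)} B_β(z, w) f(w) γ_β(w) dm(w) is holomorphic on Ω and belongs to A²_ν(Ω), with ‖f₂‖²_{A²_ν} ≤ C ‖f‖²_{A^∞_t} · G for a constant C independent of f. -/

import Mathlib

open MeasureTheory Complex Filter
open scoped ENNReal Topology

noncomputable section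

/-- The Siegel domain of the first type in `ℂ^(n+1)`:
`Ω = {τ : Im τ₁ > |τ̃|²}` where `τ̃ = (τ₂, …, τ_(n+1))`. -/
def Omega (n : ℕ) : Set (Fin (n + 1) → ℂ) :=
  {τ | (∑ j ∈ Finset.Ioi (0 : Fin (n + 1)), ‖τ j‖ ^ 2) < (τ 0).im}

/-- The weight `γ_α(τ) = (Im τ₁ − |τ̃|²)^α`. -/
def gam (n : ℕ) (α : ℝ) (τ : Fin (n + 1) → ℂ) : ℝ :=
  ((τ 0).im - ∑ j ∈ Finset.Ioi (0 : Fin (n + 1)), ‖τ j‖ ^ 2) ^ α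

/-- The weighted Bergman kernel
`B_β(z,w) = ((z₁ − w̄₁)/i − 2⟨z̃, w̃⟩)^(−((n+1)+1+β))` (dimension is `n+1`). -/
def Berg (n : ℕ) (β : ℝ) (z w : Fin (n + 1) → ℂ) : ℂ :=
  ((z 0 - starRingEnd ℂ (w 0)) / Complex.I
      - 2 * ∑ j ∈ Finset.Ioi (0 : Fin (n + 1)), z j * starRingEnd ℂ (w j))
    ^ (-(((n : ℂ) + 1) + 1 + (β : ℂ)))

/-- Membership in `A^∞_β(Ω)`: holomorphic with `sup_Ω |f| γ_β < ∞`. -/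
def MemAinf (n : ℕ) (β : ℝ) (f : (Fin (n + 1) → ℂ) → ℂ) : Prop :=
  DifferentiableOn ℂ f (Omega n) ∧
    BddAbove (Set.range fun z : Omega n => ‖f z.1‖ * gam n β z.1)

/-- The norm of `A^∞_β(Ω)`: `‖f‖ = sup_{z ∈ Ω} |f(z)| γ_β(z)`. -/
def normAinf (n : ℕ) (β : ℝ) (f : (Fin (n + 1) → ℂ) → ℂ) : ℝ :=
  ⨆ z : Omega n, ‖f z.1‖ * gam n β z.1

/-- Membership in the weighted Bergman space `A²_ν(Ω)`. -/
def MemA2 (n : ℕ) (ν : ℝ) (f : (Fin (n + 1) → ℂ) → ℂ) : Prop :=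
  DifferentiableOn ℂ f (Omega n) ∧
    (∫⁻ z in Omega n, ENNReal.ofReal (‖f z‖ ^ 2 * gam n ν z)) < ⊤

/-- The norm of `A²_ν(Ω)`. -/
def normA2 (n : ℕ) (ν : ℝ) (f : (Fin (n + 1) → ℂ) → ℂ) : ℝ :=
  Real.sqrt (∫ z in Omega n, ‖f z‖ ^ 2 * gam n ν z)

/-- `dist_{A^∞_t}(f, A²_ν) = inf {‖f − g‖_{A^∞_t} : g ∈ A²_ν}`. -/
def distA (n : ℕ) (t ν : ℝ) (f : (Fin (n + 1) → ℂ) → ℂ) : ℝ :=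
  sInf {r | ∃ g, MemA2 n ν g ∧ r = normAinf n t (fun z => f z - g z)}

/-- The level set `N_{ε,s}(f) = {z ∈ Ω : |f(z)| γ_s(z) ≥ ε}`. -/
def Nset (n : ℕ) (ε s : ℝ) (f : (Fin (n + 1) → ℂ) → ℂ) : Set (Fin (n + 1) → ℂ) :=
  {z | z ∈ Omega n ∧ ε ≤ ‖f z‖ * gam n s z}

/-- The double integral
`∫_Ω (∫_{N_{ε,t}(f)} γ_{β−t}(w) |B_β(z,w)| dm(w))² γ_ν(z) dm(z)`. -/
def Gint (n : ℕ) (β t ν ε : ℝ) (f : (Fin (n + 1) → ℂ) → ℂ) : ℝ≥0∞ :=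
  ∫⁻ z in Omega n,
    (∫⁻ w in Nset n ε t f,
        ENNReal.ofReal (gam n (β - t) w * ‖Berg n β z w‖)) ^ 2
      * ENNReal.ofReal (gam n ν z)

/-- `l₂(f) = inf {ε > 0 : G(f, ε) < ∞}`. -/
def l2 (n : ℕ) (β t ν : ℝ) (f : (Fin (n + 1) → ℂ) → ℂ) : ℝ :=
  sInf {ε | 0 < ε ∧ Gint n β t ν ε f < ⊤}

/-!
Write `Berg n β z w = kerBase n z w ^ (-bergExp n β)` and `ρ = Im τ₁ - |τ̃|²`, so `gam n α = ρ ^ α`.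
The identity `Re (kerBase n z w) = ρ z + ρ w + |z̃ - w̃|²` makes `‖kerBase n z' w‖` and
`‖kerBase n z w‖` comparable uniformly in `w ∈ Ω` for any `z, z' ∈ Ω`, with ratio at most `2`
for `z'` near `z`. Since `G < ∞`, the inner integral `bergMass` of `G` is finite at some point
of `Ω`, hence everywhere. Together with `‖f‖ γ_β ≤ ‖f‖_{A^∞_t} γ_{β-t}` this justifies
differentiating `f₂` under the integral sign, and the pointwise bound
`|f₂ z| ≤ |C_β| ‖f‖_{A^∞_t} bergMass z` integrates to the norm estimate.
-/

lemma rpow_neg_le_mul_rpow_neg {u v K s : ℝ} (hu : 0 < u) (hv : 0 < v) (hK : 0 < K)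
    (h : v ≤ K * u) (hs : 0 ≤ s) : u ^ (-s) ≤ K ^ s * v ^ (-s) := by
  rw [Real.rpow_neg hu.le, Real.rpow_neg hv.le, ← Real.inv_rpow hu.le, ← Real.inv_rpow hv.le,
    ← Real.mul_rpow hK.le (inv_nonneg.2 hv.le)]
  refine Real.rpow_le_rpow (inv_nonneg.2 hu.le) ?_ hs
  rw [inv_le_comm₀ hu (by positivity), ← div_eq_mul_inv, inv_div, div_le_iff₀ hK]
  linarith

namespace SiegelDomain

variable {n : ℕ}

def rho (n : ℕ) (z : Fin (n + 1) → ℂ) : ℝ :=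
  (z 0).im - ∑ j ∈ Finset.Ioi (0 : Fin (n + 1)), ‖z j‖ ^ 2

def kerBase (n : ℕ) (z w : Fin (n + 1) → ℂ) : ℂ :=
  (z 0 - starRingEnd ℂ (w 0)) / Complex.I
    - 2 * ∑ j ∈ Finset.Ioi (0 : Fin (n + 1)), z j * starRingEnd ℂ (w j)

def tailDistSq (n : ℕ) (z w : Fin (n + 1) → ℂ) : ℝ :=
  ∑ j ∈ Finset.Ioi (0 : Fin (n + 1)), ‖z j - w j‖ ^ 2

def tailNorm (n : ℕ) (w : Fin (n + 1) → ℂ) : ℝ :=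
  ∑ j ∈ Finset.Ioi (0 : Fin (n + 1)), ‖w j‖

lemma rho_pos {z : Fin (n + 1) → ℂ} (hz : z ∈ Omega n) : 0 < rho n z :=
  sub_pos.mpr hz

lemma gam_pos {α : ℝ} {z : Fin (n + 1) → ℂ} (hz : z ∈ Omega n) : 0 < gam n α z :=
  Real.rpow_pos_of_pos (rho_pos hz) α

lemma gam_add {α α' : ℝ} {z : Fin (n + 1) → ℂ} (hz : z ∈ Omega n) :
    gam n (α + α') z = gam n α z * gam n α' z :=
  Real.rpow_add (rho_pos hz) α α'

lemma tailDistSq_nonneg (z w : Fin (n + 1) → ℂ) : 0 ≤ tailDistSq n z w :=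
  Finset.sum_nonneg fun _ _ ↦ sq_nonneg _

lemma tailNorm_nonneg (w : Fin (n + 1) → ℂ) : 0 ≤ tailNorm n w :=
  Finset.sum_nonneg fun _ _ ↦ norm_nonneg _

lemma continuous_rho : Continuous (rho n) := by
  unfold rho; fun_prop

lemma isOpen_Omega : IsOpen (Omega n) := by
  unfold Omega; exact isOpen_lt (by fun_prop) (by fun_prop)

lemma nonempty_Omega : (Omega n).Nonempty :=
  ⟨Pi.single 0 Complex.I, by simp [Omega]⟩

lemma continuousOn_gam (α : ℝ) : ContinuousOn (gam n α) (Omega n) := fun _ hz ↦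
  ((Real.continuousAt_rpow_const _ _ (Or.inl (rho_pos hz).ne')).comp
    continuous_rho.continuousAt).continuousWithinAt

lemma measurable_gam (α : ℝ) : Measurable (gam n α) :=
  continuous_rho.measurable.pow_const α

lemma re_kerBase (z w : Fin (n + 1) → ℂ) :
    (kerBase n z w).re = rho n z + rho n w + tailDistSq n z w := by
  have hsum :
      2 * ∑ j ∈ Finset.Ioi (0 : Fin (n + 1)), ((z j).re * (w j).re - (z j).im * -(w j).im)
        = ∑ j ∈ Finset.Ioi (0 : Fin (n + 1)), ‖z j‖ ^ 2
          + ∑ j ∈ Finset.Ioi (0 : Fin (n + 1)), ‖w j‖ ^ 2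
          - ∑ j ∈ Finset.Ioi (0 : Fin (n + 1)), ‖z j - w j‖ ^ 2 := by
    rw [Finset.mul_sum, ← Finset.sum_add_distrib, ← Finset.sum_sub_distrib]
    refine Finset.sum_congr rfl fun j _ ↦ ?_
    simp only [Complex.sq_norm, Complex.normSq_apply, Complex.sub_re, Complex.sub_im]
    ring
  simp only [kerBase, rho, tailDistSq, Complex.sub_re, Complex.div_I, Complex.mul_re,
    Complex.re_sum, Complex.im_sum, Complex.conj_re, Complex.conj_im, Complex.neg_re,
    Complex.mul_im, Complex.I_re, Complex.I_im, Complex.sub_im]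
  rw [show (2 : ℂ).re = 2 from rfl, show (2 : ℂ).im = 0 from rfl, hsum]
  ring

lemma re_kerBase_pos {z w : Fin (n + 1) → ℂ} (hz : z ∈ Omega n) (hw : w ∈ Omega n) :
    0 < (kerBase n z w).re := by
  rw [re_kerBase]
  linarith [rho_pos hz, rho_pos hw, tailDistSq_nonneg z w]

lemma rho_add_tailDistSq_le_norm_kerBase (z : Fin (n + 1) → ℂ) {w : Fin (n + 1) → ℂ}
    (hw : w ∈ Omega n) : rho n z + tailDistSq n z w ≤ ‖kerBase n z w‖ := by
  have h := Complex.re_le_norm (kerBase n z w)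
  rw [re_kerBase] at h
  linarith [rho_pos hw]

lemma norm_kerBase_pos {z w : Fin (n + 1) → ℂ} (hz : z ∈ Omega n) (hw : w ∈ Omega n) :
    0 < ‖kerBase n z w‖ :=
  (add_pos_of_pos_of_nonneg (rho_pos hz) (tailDistSq_nonneg z w)).trans_le
    (rho_add_tailDistSq_le_norm_kerBase z hw)

/-- `kerBase n · w` is affine; this is its linear part. -/
def kerBaseDeriv (n : ℕ) (w : Fin (n + 1) → ℂ) : (Fin (n + 1) → ℂ) →L[ℂ] ℂ :=
  Complex.I⁻¹ • ContinuousLinearMap.proj 0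
    - (2 : ℂ) • ∑ j ∈ Finset.Ioi (0 : Fin (n + 1)),
        starRingEnd ℂ (w j) • ContinuousLinearMap.proj (R := ℂ) (φ := fun _ ↦ ℂ) j

lemma kerBaseDeriv_apply (w v : Fin (n + 1) → ℂ) :
    kerBaseDeriv n w v
      = v 0 / Complex.I - 2 * ∑ j ∈ Finset.Ioi (0 : Fin (n + 1)), v j * starRingEnd ℂ (w j) := by
  simp only [kerBaseDeriv, _root_.sub_apply, _root_.smul_apply,
    _root_.sum_apply, ContinuousLinearMap.proj_apply, smul_eq_mul, div_eq_inv_mul,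
    mul_comm (starRingEnd ℂ _)]

lemma kerBase_sub_kerBase (z z' w : Fin (n + 1) → ℂ) :
    kerBase n z' w - kerBase n z w = kerBaseDeriv n w (z' - z) := by
  simp only [kerBaseDeriv_apply, kerBase, Pi.sub_apply, sub_mul, Finset.sum_sub_distrib]
  ring

lemma hasFDerivAt_kerBase (w z : Fin (n + 1) → ℂ) :
    HasFDerivAt (kerBase n · w) (kerBaseDeriv n w) z := by
  have h : (kerBase n · w) = fun z ↦ kerBaseDeriv n w z + kerBase n 0 w := by
    funext z
    rw [← sub_zero z, ← kerBase_sub_kerBase, sub_zero, sub_add_cancel]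
  rw [h]
  exact (kerBaseDeriv n w).hasFDerivAt.add_const _

lemma norm_kerBaseDeriv_le (w : Fin (n + 1) → ℂ) :
    ‖kerBaseDeriv n w‖ ≤ 1 + 2 * tailNorm n w := by
  refine ContinuousLinearMap.opNorm_le_bound _ (by linarith [tailNorm_nonneg w]) fun v ↦ ?_
  have hcoord : ∀ j, ‖v j‖ ≤ ‖v‖ := norm_le_pi_norm v
  have hsum : ‖∑ j ∈ Finset.Ioi (0 : Fin (n + 1)), v j * starRingEnd ℂ (w j)‖
      ≤ tailNorm n w * ‖v‖ := by
    rw [tailNorm, Finset.sum_mul]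
    refine (norm_sum_le _ _).trans (Finset.sum_le_sum fun j _ ↦ ?_)
    rw [norm_mul, Complex.norm_conj, mul_comm]
    exact mul_le_mul_of_nonneg_left (hcoord j) (norm_nonneg _)
  calc ‖kerBaseDeriv n w v‖
      ≤ ‖v 0 / Complex.I‖
        + ‖2 * ∑ j ∈ Finset.Ioi (0 : Fin (n + 1)), v j * starRingEnd ℂ (w j)‖ := by
        rw [kerBaseDeriv_apply]; exact norm_sub_le _ _
    _ ≤ ‖v‖ + 2 * (tailNorm n w * ‖v‖) := by
        rw [norm_div, Complex.norm_I, div_one, norm_mul, Complex.norm_two]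
        gcongr
        exact hcoord 0
    _ = (1 + 2 * tailNorm n w) * ‖v‖ := by ring

/-- The linear growth of `tailNorm` is absorbed by the quadratic term of `re_kerBase`. -/
lemma exists_one_add_two_mul_tailNorm_le {z : Fin (n + 1) → ℂ} (hz : z ∈ Omega n) :
    ∃ C > 0, ∀ w ∈ Omega n, 1 + 2 * tailNorm n w ≤ C * ‖kerBase n z w‖ := by
  set c := ∑ j ∈ Finset.Ioi (0 : Fin (n + 1)), (‖z j‖ + 1 / 2)
  have hc : 0 ≤ c := Finset.sum_nonneg fun _ _ ↦ by positivity
  have hρ := rho_pos hz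
  refine ⟨max ((1 + 2 * c) / rho n z) 1, by positivity, fun w hw ↦ ?_⟩
  have htail : tailNorm n w ≤ c + tailDistSq n z w / 2 := by
    rw [tailDistSq, Finset.sum_div, ← Finset.sum_add_distrib]
    refine Finset.sum_le_sum fun j _ ↦ ?_
    have h := norm_sub_norm_le (w j) (z j)
    rw [norm_sub_rev] at h
    nlinarith [sq_nonneg (‖z j - w j‖ - 1)]
  have hC₁ : 1 + 2 * c ≤ max ((1 + 2 * c) / rho n z) 1 * rho n z :=
    (div_le_iff₀ hρ).mp (le_max_left _ _)
  have hC₂ : tailDistSq n z w ≤ max ((1 + 2 * c) / rho n z) 1 * tailDistSq n z w :=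
    le_mul_of_one_le_left (tailDistSq_nonneg z w) (le_max_right _ _)
  calc 1 + 2 * tailNorm n w ≤ 1 + 2 * c + tailDistSq n z w := by linarith
    _ ≤ max ((1 + 2 * c) / rho n z) 1 * (rho n z + tailDistSq n z w) := by linarith
    _ ≤ max ((1 + 2 * c) / rho n z) 1 * ‖kerBase n z w‖ :=
        mul_le_mul_of_nonneg_left (rho_add_tailDistSq_le_norm_kerBase z hw) (by positivity)

lemma exists_norm_kerBase_sub_le {z : Fin (n + 1) → ℂ} (hz : z ∈ Omega n) :
    ∃ C > 0, ∀ z' : Fin (n + 1) → ℂ, ∀ w ∈ Omega n,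
      ‖kerBase n z' w - kerBase n z w‖ ≤ C * ‖z' - z‖ * ‖kerBase n z w‖ := by
  obtain ⟨C, hC, hbound⟩ := exists_one_add_two_mul_tailNorm_le hz
  refine ⟨C, hC, fun z' w hw ↦ ?_⟩
  rw [kerBase_sub_kerBase]
  calc ‖kerBaseDeriv n w (z' - z)‖ ≤ (1 + 2 * tailNorm n w) * ‖z' - z‖ :=
        (kerBaseDeriv n w).le_of_opNorm_le (norm_kerBaseDeriv_le w) _
    _ ≤ C * ‖kerBase n z w‖ * ‖z' - z‖ := by gcongr; exact hbound w hw
    _ = C * ‖z' - z‖ * ‖kerBase n z w‖ := by ring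

lemma exists_norm_kerBase_le_mul {z : Fin (n + 1) → ℂ} (hz : z ∈ Omega n)
    (z' : Fin (n + 1) → ℂ) : ∃ K > 0, ∀ w ∈ Omega n, ‖kerBase n z' w‖ ≤ K * ‖kerBase n z w‖ := by
  obtain ⟨C, hC, hsub⟩ := exists_norm_kerBase_sub_le hz
  refine ⟨1 + C * ‖z' - z‖, by positivity, fun w hw ↦ ?_⟩
  linarith [norm_le_insert' (kerBase n z' w) (kerBase n z w), hsub z' w hw]

lemma eventually_norm_kerBase_le_two_mul {z₀ : Fin (n + 1) → ℂ} (hz₀ : z₀ ∈ Omega n) :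
    ∀ᶠ z in 𝓝 z₀, z ∈ Omega n ∧ ∀ w ∈ Omega n, ‖kerBase n z₀ w‖ ≤ 2 * ‖kerBase n z w‖ := by
  obtain ⟨C, hC, hsub⟩ := exists_norm_kerBase_sub_le hz₀
  filter_upwards [isOpen_Omega.mem_nhds hz₀,
    Metric.ball_mem_nhds z₀ (show 0 < 1 / (2 * C) by positivity)] with z hz hball
  refine ⟨hz, fun w hw ↦ ?_⟩
  have hzz₀ : C * ‖z - z₀‖ ≤ 1 / 2 := by
    rw [Metric.mem_ball, dist_eq_norm, lt_div_iff₀ (by positivity)] at hball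
    linarith
  have hhalf : C * ‖z - z₀‖ * ‖kerBase n z₀ w‖ ≤ 1 / 2 * ‖kerBase n z₀ w‖ :=
    mul_le_mul_of_nonneg_right hzz₀ (norm_nonneg _)
  linarith [norm_le_insert' (kerBase n z₀ w) (kerBase n z w),
    norm_sub_rev (kerBase n z₀ w) (kerBase n z w), hsub z w hw]

lemma continuous_kerBase (z : Fin (n + 1) → ℂ) : Continuous (kerBase n z) := by
  unfold kerBase; fun_prop

lemma continuous_kerBaseDeriv : Continuous (kerBaseDeriv n) := by
  unfold kerBaseDeriv; fun_prop

def bergExp (n : ℕ) (β : ℝ) : ℝ := n + 2 + β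

lemma Berg_eq_kerBase_cpow (β : ℝ) (z w : Fin (n + 1) → ℂ) :
    Berg n β z w = kerBase n z w ^ ((-bergExp n β : ℝ) : ℂ) := by
  simp only [Berg, kerBase, bergExp]
  congr 1
  push_cast
  ring

lemma norm_Berg (β : ℝ) (z w : Fin (n + 1) → ℂ) :
    ‖Berg n β z w‖ = ‖kerBase n z w‖ ^ (-bergExp n β) := by
  rw [Berg_eq_kerBase_cpow, Complex.norm_cpow_real]

lemma measurable_Berg (β : ℝ) (z : Fin (n + 1) → ℂ) : Measurable (Berg n β z) :=
  (continuous_kerBase z).measurable.pow_const _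

lemma norm_Berg_le_of_norm_kerBase_le {β K : ℝ} (hβ : 0 ≤ bergExp n β) {z z' w : Fin (n + 1) → ℂ}
    (hz : z ∈ Omega n) (hz' : z' ∈ Omega n) (hw : w ∈ Omega n) (hK : 0 < K)
    (h : ‖kerBase n z' w‖ ≤ K * ‖kerBase n z w‖) :
    ‖Berg n β z w‖ ≤ K ^ bergExp n β * ‖Berg n β z' w‖ := by
  rw [norm_Berg, norm_Berg]
  exact rpow_neg_le_mul_rpow_neg (norm_kerBase_pos hz hw) (norm_kerBase_pos hz' hw) hK h hβ

def bergDeriv (n : ℕ) (β : ℝ) (z w : Fin (n + 1) → ℂ) : (Fin (n + 1) → ℂ) →L[ℂ] ℂ :=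
  (((-bergExp n β : ℝ) : ℂ) * kerBase n z w ^ (((-bergExp n β : ℝ) : ℂ) - 1)) • kerBaseDeriv n w

lemma hasFDerivAt_Berg (β : ℝ) {z w : Fin (n + 1) → ℂ} (hz : z ∈ Omega n) (hw : w ∈ Omega n) :
    HasFDerivAt (Berg n β · w) (bergDeriv n β z w) z := by
  simp_rw [Berg_eq_kerBase_cpow]
  exact ((Complex.hasStrictDerivAt_cpow_const (Or.inl (re_kerBase_pos hz hw))).hasDerivAt)
    |>.comp_hasFDerivAt z (hasFDerivAt_kerBase w z)

lemma norm_bergDeriv_le {β : ℝ} (hβ : 0 ≤ bergExp n β) (z w : Fin (n + 1) → ℂ) :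
    ‖bergDeriv n β z w‖
      ≤ bergExp n β * ‖kerBase n z w‖ ^ (-bergExp n β - 1) * (1 + 2 * tailNorm n w) := by
  have hexp : ((-bergExp n β : ℝ) : ℂ) - 1 = ((-bergExp n β - 1 : ℝ) : ℂ) := by push_cast; ring
  rw [bergDeriv, norm_smul, norm_mul, hexp, Complex.norm_cpow_real, Complex.norm_real,
    Real.norm_eq_abs, abs_neg, abs_of_nonneg hβ]
  gcongr
  exact norm_kerBaseDeriv_le w

lemma measurableSet_Nset {f : (Fin (n + 1) → ℂ) → ℂ} (hf : ContinuousOn f (Omega n))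
    (ε s : ℝ) : MeasurableSet (Nset n ε s f) := by
  have hmeas : Measurable fun z : Omega n ↦ ‖f z‖ * gam n s z :=
    (hf.norm.mul (continuousOn_gam s)).domRestrict.measurable
  convert isOpen_Omega.measurableSet.subtype_image
    (measurableSet_le (f := fun _ ↦ ε) measurable_const hmeas)
  ext z
  simp [Nset, and_comm]

lemma sq_normA2_le {ν : ℝ} {F : (Fin (n + 1) → ℂ) → ℂ} {c : ℝ≥0∞} (hc : c ≠ ⊤)
    (h : ∫⁻ z in Omega n, ENNReal.ofReal (‖F z‖ ^ 2 * gam n ν z) ≤ c) :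
    normA2 n ν F ^ 2 ≤ c.toReal := by
  have hint : ∫ z in Omega n, ‖F z‖ ^ 2 * gam n ν z ≤ c.toReal := by
    refine (Real.le_norm_self _).trans ((norm_integral_le_lintegral_norm _).trans
      (ENNReal.toReal_mono hc ((le_of_eq ?_).trans h)))
    refine setLIntegral_congr_fun isOpen_Omega.measurableSet fun z hz ↦ ?_
    rw [Real.norm_of_nonneg (mul_nonneg (sq_nonneg _) (gam_pos hz).le)]
  calc normA2 n ν F ^ 2 ≤ Real.sqrt c.toReal ^ 2 := by
        unfold normA2; gcongr
    _ = c.toReal := Real.sq_sqrt ENNReal.toReal_nonneg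

lemma exists_mem_Omega_lt_top {F : (Fin (n + 1) → ℂ) → ℝ≥0∞} (ν : ℝ)
    (h : ∫⁻ z in Omega n, F z ^ 2 * ENNReal.ofReal (gam n ν z) < ⊤) :
    ∃ z ∈ Omega n, F z < ⊤ := by
  by_contra! hF
  have htop : ∫⁻ z in Omega n, F z ^ 2 * ENNReal.ofReal (gam n ν z) = ⊤ := by
    rw [setLIntegral_congr_fun isOpen_Omega.measurableSet (g := fun _ ↦ ⊤) fun z hz ↦ by
      simp [top_le_iff.mp (hF z hz), ENNReal.top_mul, gam_pos hz]]
    rw [setLIntegral_const, ENNReal.top_mul (isOpen_Omega.measure_pos volume nonempty_Omega).ne']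
  exact h.ne htop

def bergMass (n : ℕ) (β s : ℝ) (N : Set (Fin (n + 1) → ℂ)) (z : Fin (n + 1) → ℂ) : ℝ≥0∞ :=
  ∫⁻ w in N, ENNReal.ofReal (gam n s w * ‖Berg n β z w‖)

variable {β s M : ℝ} {N : Set (Fin (n + 1) → ℂ)} {φ : (Fin (n + 1) → ℂ) → ℂ}

lemma normAinf_nonneg (t : ℝ) (f : (Fin (n + 1) → ℂ) → ℂ) : 0 ≤ normAinf n t f :=
  Real.iSup_nonneg fun z ↦ mul_nonneg (norm_nonneg _) (gam_pos z.2).le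

lemma norm_mul_gam_le {t : ℝ} {f : (Fin (n + 1) → ℂ) → ℂ} (hf : MemAinf n t f)
    {w : Fin (n + 1) → ℂ} (hw : w ∈ Omega n) :
    ‖f w * (gam n β w : ℂ)‖ ≤ normAinf n t f * gam n (β - t) w := by
  rw [norm_mul, Complex.norm_real, Real.norm_of_nonneg (gam_pos hw).le, ← add_sub_cancel t β,
    gam_add hw, add_sub_cancel_left, ← mul_assoc]
  exact mul_le_mul_of_nonneg_right (le_ciSup hf.2 ⟨w, hw⟩) (gam_pos hw).le

lemma bergMass_lt_top (hβ : 0 ≤ bergExp n β) (hN : N ⊆ Omega n) (hNm : MeasurableSet N)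
    {z₁ z : Fin (n + 1) → ℂ} (hz₁ : z₁ ∈ Omega n) (hz : z ∈ Omega n)
    (h : bergMass n β s N z₁ < ⊤) : bergMass n β s N z < ⊤ := by
  obtain ⟨K, hK, hcomp⟩ := exists_norm_kerBase_le_mul hz z₁
  have hle : bergMass n β s N z ≤ ENNReal.ofReal (K ^ bergExp n β) * bergMass n β s N z₁ := by
    rw [bergMass, bergMass, ← lintegral_const_mul' _ _ ENNReal.ofReal_ne_top]
    refine setLIntegral_mono' hNm fun w hw ↦ ?_
    rw [← ENNReal.ofReal_mul (by positivity)]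
    refine ENNReal.ofReal_le_ofReal ?_
    calc gam n s w * ‖Berg n β z w‖
        ≤ gam n s w * (K ^ bergExp n β * ‖Berg n β z₁ w‖) :=
          mul_le_mul_of_nonneg_left (norm_Berg_le_of_norm_kerBase_le hβ hz hz₁ (hN hw) hK
            (hcomp w (hN hw))) (gam_pos (hN hw)).le
      _ = K ^ bergExp n β * (gam n s w * ‖Berg n β z₁ w‖) := by ring
  exact hle.trans_lt (ENNReal.mul_lt_top ENNReal.ofReal_lt_top h)

lemma integrable_gam_mul_norm_Berg (hN : N ⊆ Omega n) (hNm : MeasurableSet N)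
    {z : Fin (n + 1) → ℂ} (h : bergMass n β s N z < ⊤) :
    Integrable (fun w ↦ gam n s w * ‖Berg n β z w‖) (volume.restrict N) := by
  refine ⟨((measurable_gam s).mul (measurable_Berg β z).norm).aestronglyMeasurable, ?_⟩
  refine (hasFiniteIntegral_iff_ofReal ?_).mpr h
  exact ae_restrict_of_forall_mem hNm fun w hw ↦ mul_nonneg (gam_pos (hN hw)).le (norm_nonneg _)

lemma lintegral_enorm_Berg_mul_le (hN : N ⊆ Omega n) (hNm : MeasurableSet N)
    (hφ : ∀ w ∈ N, ‖φ w‖ ≤ M * gam n s w) (z : Fin (n + 1) → ℂ) :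
    ∫⁻ w in N, ‖Berg n β z w * φ w‖ₑ ≤ ENNReal.ofReal M * bergMass n β s N z := by
  rw [bergMass, ← lintegral_const_mul' _ _ ENNReal.ofReal_ne_top]
  refine setLIntegral_mono' hNm fun w hw ↦ ?_
  rw [← ENNReal.ofReal_mul' (mul_nonneg (gam_pos (hN hw)).le (norm_nonneg _)), ← ofReal_norm,
    norm_mul]
  refine ENNReal.ofReal_le_ofReal ?_
  calc ‖Berg n β z w‖ * ‖φ w‖ ≤ ‖Berg n β z w‖ * (M * gam n s w) :=
        mul_le_mul_of_nonneg_left (hφ w hw) (norm_nonneg _)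
    _ = M * (gam n s w * ‖Berg n β z w‖) := by ring

lemma integrable_Berg_mul (hN : N ⊆ Omega n) (hNm : MeasurableSet N)
    (hφm : AEStronglyMeasurable φ (volume.restrict N)) (hφ : ∀ w ∈ N, ‖φ w‖ ≤ M * gam n s w)
    {z : Fin (n + 1) → ℂ} (h : bergMass n β s N z < ⊤) :
    Integrable (fun w ↦ Berg n β z w * φ w) (volume.restrict N) :=
  ⟨(measurable_Berg β z).aestronglyMeasurable.mul hφm,
    (lintegral_enorm_Berg_mul_le hN hNm hφ z).trans_lt
      (ENNReal.mul_lt_top ENNReal.ofReal_lt_top h)⟩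

lemma norm_bergDeriv_le_mul_norm_Berg (hβ : 0 ≤ bergExp n β) {z₀ z w : Fin (n + 1) → ℂ}
    (hz₀ : z₀ ∈ Omega n) (hz : z ∈ Omega n) (hw : w ∈ Omega n) {C : ℝ}
    (hC : 1 + 2 * tailNorm n w ≤ C * ‖kerBase n z₀ w‖)
    (h2 : ‖kerBase n z₀ w‖ ≤ 2 * ‖kerBase n z w‖) :
    ‖bergDeriv n β z w‖ ≤ bergExp n β * 2 ^ (bergExp n β + 1) * C * ‖Berg n β z₀ w‖ := by
  set e := bergExp n β with he
  have hb₀ := norm_kerBase_pos hz₀ hw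
  have hcomp : ‖kerBase n z w‖ ^ (-e - 1) ≤ 2 ^ (e + 1) * ‖kerBase n z₀ w‖ ^ (-e - 1) := by
    rw [← neg_add']
    exact rpow_neg_le_mul_rpow_neg (norm_kerBase_pos hz hw) hb₀ two_pos h2 (by linarith)
  calc ‖bergDeriv n β z w‖ ≤ e * ‖kerBase n z w‖ ^ (-e - 1) * (1 + 2 * tailNorm n w) :=
        norm_bergDeriv_le hβ z w
    _ ≤ e * (2 ^ (e + 1) * ‖kerBase n z₀ w‖ ^ (-e - 1)) * (C * ‖kerBase n z₀ w‖) :=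
        mul_le_mul (mul_le_mul_of_nonneg_left hcomp hβ) hC
          (by linarith [tailNorm_nonneg (n := n) w]) (by positivity)
    _ = e * 2 ^ (e + 1) * C * ‖Berg n β z₀ w‖ := by
        rw [norm_Berg, ← he, Real.rpow_sub_one hb₀.ne']
        field_simp

/-- Differentiation under the integral sign, dominated near `z₀` by a multiple of the finite
`bergMass` integrand at `z₀`. -/
lemma differentiableOn_integral_Berg_mul (hβ : 0 ≤ bergExp n β) (hN : N ⊆ Omega n)
    (hNm : MeasurableSet N) (hφm : AEStronglyMeasurable φ (volume.restrict N))
    (hφ : ∀ w ∈ N, ‖φ w‖ ≤ M * gam n s w) (hmass : ∀ z ∈ Omega n, bergMass n β s N z < ⊤) :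
    DifferentiableOn ℂ (fun z ↦ ∫ w in N, Berg n β z w * φ w) (Omega n) := by
  intro z₀ hz₀
  obtain ⟨C, -, hC⟩ := exists_one_add_two_mul_tailNorm_le hz₀
  have hF'_meas : AEStronglyMeasurable (fun w ↦ φ w • bergDeriv n β z₀ w) (volume.restrict N) :=
    hφm.smul (((continuous_kerBase z₀).measurable.pow_const _ |>.const_mul _).aestronglyMeasurable
      |>.smul continuous_kerBaseDeriv.aestronglyMeasurable)
  set S := {z | z ∈ Omega n ∧ ∀ w ∈ Omega n, ‖kerBase n z₀ w‖ ≤ 2 * ‖kerBase n z w‖}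
  have h_bound : ∀ᵐ w ∂volume.restrict N, ∀ z ∈ S,
      ‖φ w • bergDeriv n β z w‖ ≤ M * (bergExp n β * 2 ^ (bergExp n β + 1) * C) *
        (gam n s w * ‖Berg n β z₀ w‖) := by
    filter_upwards [ae_restrict_mem hNm] with w hw z ⟨hz, h2⟩
    rw [norm_smul]
    calc ‖φ w‖ * ‖bergDeriv n β z w‖
        ≤ (M * gam n s w) * (bergExp n β * 2 ^ (bergExp n β + 1) * C * ‖Berg n β z₀ w‖) :=
          mul_le_mul (hφ w hw) (norm_bergDeriv_le_mul_norm_Berg hβ hz₀ hz (hN hw)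
            (hC w (hN hw)) (h2 w (hN hw))) (norm_nonneg _) ((norm_nonneg _).trans (hφ w hw))
      _ = _ := by ring
  have h_diff : ∀ᵐ w ∂volume.restrict N, ∀ z ∈ S,
      HasFDerivAt (fun z ↦ Berg n β z w * φ w) (φ w • bergDeriv n β z w) z := by
    filter_upwards [ae_restrict_mem hNm] with w hw z ⟨hz, _⟩
    exact (hasFDerivAt_Berg β hz (hN hw)).mul_const (φ w)
  exact (hasFDerivAt_integral_of_dominated_of_fderiv_le (eventually_norm_kerBase_le_two_mul hz₀)
    (.of_forall fun z ↦ (measurable_Berg β z).aestronglyMeasurable.mul hφm)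
    (integrable_Berg_mul hN hNm hφm hφ (hmass z₀ hz₀)) hF'_meas h_bound
    ((integrable_gam_mul_norm_Berg hN hNm (hmass z₀ hz₀)).const_mul _)
    h_diff).differentiableAt.differentiableWithinAt

lemma lintegral_sq_mul_gam_le (hN : N ⊆ Omega n) (hNm : MeasurableSet N)
    (hφ : ∀ w ∈ N, ‖φ w‖ ≤ M * gam n s w) (c : ℂ) (ν : ℝ) :
    ∫⁻ z in Omega n, ENNReal.ofReal (‖c * ∫ w in N, Berg n β z w * φ w‖ ^ 2 * gam n ν z)
      ≤ (‖c‖ₑ * ENNReal.ofReal M) ^ 2 *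
        ∫⁻ z in Omega n, bergMass n β s N z ^ 2 * ENNReal.ofReal (gam n ν z) := by
  rw [← lintegral_const_mul' _ _ (by finiteness)]
  refine setLIntegral_mono' isOpen_Omega.measurableSet fun z _ ↦ ?_
  have hint : ‖∫ w in N, Berg n β z w * φ w‖ₑ ≤ ENNReal.ofReal M * bergMass n β s N z :=
    (enorm_integral_le_lintegral_enorm _).trans (lintegral_enorm_Berg_mul_le hN hNm hφ z)
  rw [ENNReal.ofReal_mul (sq_nonneg _), ENNReal.ofReal_pow (norm_nonneg _), ofReal_norm, enorm_mul]
  calc (‖c‖ₑ * ‖∫ w in N, Berg n β z w * φ w‖ₑ) ^ 2 * ENNReal.ofReal (gam n ν z)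
      ≤ (‖c‖ₑ * (ENNReal.ofReal M * bergMass n β s N z)) ^ 2 * ENNReal.ofReal (gam n ν z) := by
        gcongr
    _ = _ := by ring

end SiegelDomain

open SiegelDomain in
theorem stmt11_general (n : ℕ) (ν β Cβ : ℝ) (hβ : 0 < β) (t : ℝ) :
    ∃ C > (0 : ℝ), ∀ f ε, MemAinf n t f → 0 < ε → Gint n β t ν ε f < ⊤ →
      DifferentiableOn ℂ
        (fun z => (Cβ : ℂ) * ∫ w in Nset n ε t f, Berg n β z w * f w * (gam n β w : ℂ))
        (Omega n) ∧
      MemA2 n ν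
        (fun z => (Cβ : ℂ) * ∫ w in Nset n ε t f, Berg n β z w * f w * (gam n β w : ℂ)) ∧
      (normA2 n ν
          (fun z => (Cβ : ℂ) * ∫ w in Nset n ε t f, Berg n β z w * f w * (gam n β w : ℂ))) ^ 2
        ≤ C * (normAinf n t f) ^ 2 * (Gint n β t ν ε f).toReal := by
  refine ⟨Cβ ^ 2 + 1, by positivity, fun f ε hf _ hG ↦ ?_⟩
  set N := Nset n ε t f
  set M := normAinf n t f
  have hN : N ⊆ Omega n := fun _ hw ↦ hw.1
  have hNm : MeasurableSet N := measurableSet_Nset hf.1.continuousOn ε t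
  have hβ' : 0 ≤ bergExp n β := by unfold bergExp; positivity
  have hφ : ∀ w ∈ N, ‖f w * (gam n β w : ℂ)‖ ≤ M * gam n (β - t) w :=
    fun w hw ↦ norm_mul_gam_le hf (hN hw)
  have hφm : AEStronglyMeasurable (fun w ↦ f w * (gam n β w : ℂ)) (volume.restrict N) :=
    ((hf.1.continuousOn.mono hN).aestronglyMeasurable hNm).mul
      (Complex.measurable_ofReal.comp (measurable_gam β)).aestronglyMeasurable
  have hmass : ∀ z ∈ Omega n, bergMass n β (β - t) N z < ⊤ := by
    obtain ⟨z₁, hz₁, h⟩ := exists_mem_Omega_lt_top ν hG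
    exact fun z hz ↦ bergMass_lt_top hβ' hN hNm hz₁ hz h
  simp_rw [mul_assoc (Berg n β _ _)]
  have hdiff := (differentiableOn_integral_Berg_mul hβ' hN hNm hφm hφ hmass).const_mul (Cβ : ℂ)
  have hL2 := lintegral_sq_mul_gam_le (β := β) hN hNm hφ (Cβ : ℂ) ν
  have hfin : (‖(Cβ : ℂ)‖ₑ * ENNReal.ofReal M) ^ 2 * Gint n β t ν ε f ≠ ⊤ :=
    ENNReal.mul_ne_top (by finiteness) hG.ne
  refine ⟨hdiff, ⟨hdiff, hL2.trans_lt hfin.lt_top⟩, (sq_normA2_le hfin hL2).trans ?_⟩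
  rw [ENNReal.toReal_mul, ENNReal.toReal_pow, ENNReal.toReal_mul, toReal_enorm,
    ENNReal.toReal_ofReal (normAinf_nonneg t f), Complex.norm_real, Real.norm_eq_abs, mul_pow,
    sq_abs]
  gcongr
  linarith

/-- if `G = ∫_Ω (∫_{N_{ε,t}(f)} γ_{β−t} |B_β| dm)² γ_ν dm < ∞`, then
`f₂(z) = C_β ∫_{N_{ε,t}(f)} B_β(z,w) f(w) γ_β(w) dm(w)` is holomorphic on `Ω`,
belongs to `A²_ν(Ω)`, and `‖f₂‖²_{A²_ν} ≤ C ‖f‖²_{A^∞_t} · G` with `C`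
independent of `f`. -/
theorem stmt11 (n : ℕ) (ν β Cβ : ℝ) (hν : -1 < ν) (hβ : 0 < β) (t : ℝ)
    (ht : t = (ν + (n + 1 : ℝ) + 1) / 2) :
    ∃ C > (0 : ℝ), ∀ f ε, MemAinf n t f → 0 < ε → Gint n β t ν ε f < ⊤ →
      DifferentiableOn ℂ
        (fun z => (Cβ : ℂ) * ∫ w in Nset n ε t f, Berg n β z w * f w * (gam n β w : ℂ))
        (Omega n) ∧
      MemA2 n ν
        (fun z => (Cβ : ℂ) * ∫ w in Nset n ε t f, Berg n β z w * f w * (gam n β w : ℂ)) ∧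
      (normA2 n ν
          (fun z => (Cβ : ℂ) * ∫ w in Nset n ε t f, Berg n β z w * f w * (gam n β w : ℂ))) ^ 2
        ≤ C * (normAinf n t f) ^ 2 * (Gint n β t ν ε f).toReal :=
  stmt11_general n ν β Cβ hβ t

end
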